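/- Twist is subadditive: for A, B : Fin 26 → ℕ, define twist(u) = U(u) − L(u) ∈ ℤ, where U(u) is the sum of the 13 largest entries of u and L(u) the sum of the 13 smallest. Then twist(A + B) ≤ twist(A) + twist(B). -/

import Mathlib

/-- The sum of the 13 largest entries of `u : Fin 26 → ℕ`
(upper half of the nondecreasing rearrangement). -/
def upperSum (u : Fin 26 → ℕ) : ℕ :=
  ∑ i ∈ Finset.univ.filter (fun i : Fin 26 => 13 ≤ (i : ℕ)), (u ∘ Tuple.sort u) i

/-- The sum of the 13 smallest entries of `u : Fin 26 → ℕ`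
(lower half of the nondecreasing rearrangement). -/
def lowerSum (u : Fin 26 → ℕ) : ℕ :=
  ∑ i ∈ Finset.univ.filter (fun i : Fin 26 => (i : ℕ) < 13), (u ∘ Tuple.sort u) i

/-- The twist of a frequency vector: sum of its 13 largest entries minus the sum
of its 13 smallest entries, as an integer. -/
def twist (u : Fin 26 → ℕ) : ℤ :=
  (upperSum u : ℤ) - (lowerSum u : ℤ)

lemma fin_strictMono_le_apply (f : Fin 13 → Fin 26) (hf : StrictMono f) (k : Fin 13) :
    (k : ℕ) ≤ (f k : ℕ) := by
  induction k using Fin.induction with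
  | zero => exact Nat.zero_le _
  | succ i ih =>
    have h1 : f i.castSucc < f i.succ := hf Fin.castSucc_lt_succ
    have h2 : (i.castSucc : ℕ) ≤ (f i.castSucc : ℕ) := ih
    simp only [Fin.coe_castSucc] at h2
    simp only [Fin.val_succ]
    omega

lemma fin_strictMono_apply_le (f : Fin 13 → Fin 26) (hf : StrictMono f) (k : Fin 13) :
    (f k : ℕ) ≤ 13 + (k : ℕ) := by
  set g : Fin 13 → Fin 26 := fun j => (f j.rev).rev with hg
  have hgm : StrictMono g := by
    intro a b hab
    simp only [hg, Fin.rev_lt_rev]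
    exact hf (Fin.rev_lt_rev.mpr hab)
  have := fin_strictMono_le_apply g hgm k.rev
  simp only [hg, Fin.rev_rev, Fin.val_rev] at this
  have hk : (k : ℕ) < 13 := k.isLt
  have hfk : (f k : ℕ) < 26 := (f k).isLt
  omega

lemma sum_le_of_monotone (v : Fin 26 → ℕ) (hv : Monotone v) (T : Finset (Fin 26))
    (hT : T.card = 13) :
    ∑ j ∈ T, v j ≤ ∑ i ∈ Finset.univ.filter (fun i : Fin 26 => 13 ≤ (i : ℕ)), v i := by
  set f := T.orderEmbOfFin hT with hf
  have hT' : T = Finset.image f Finset.univ := by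
    ext x
    simp only [Finset.mem_image, Finset.mem_univ, true_and]
    constructor
    · intro hx
      have : x ∈ Set.range f := by rw [hf, Finset.range_orderEmbOfFin]; exact hx
      exact this
    · rintro ⟨k, rfl⟩
      exact Finset.orderEmbOfFin_mem T hT k
  have e : Fin 13 → Fin 26 := fun k => ⟨13 + k, by omega⟩
  have hE : Finset.univ.filter (fun i : Fin 26 => 13 ≤ (i : ℕ)) =
      Finset.image (fun k : Fin 13 => (⟨13 + k, by omega⟩ : Fin 26)) Finset.univ := by
    ext x
    simp only [Finset.mem_filter, Finset.mem_univ, true_and, Finset.mem_image]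
    constructor
    · intro hx
      exact ⟨⟨x - 13, by omega⟩, by ext; simp; omega⟩
    · rintro ⟨k, rfl⟩
      simp
  rw [hT', hE, Finset.sum_image (fun a _ b _ h => f.injective h),
    Finset.sum_image (by intro a _ b _ h; simpa [Fin.ext_iff] using h)]
  apply Finset.sum_le_sum
  intro k _
  apply hv
  have := fin_strictMono_apply_le f f.strictMono k
  simpa [Fin.le_iff_val_le_val] using this

lemma sum_le_upperSum (u : Fin 26 → ℕ) (S : Finset (Fin 26)) (hS : S.card = 13) :
    ∑ i ∈ S, u i ≤ upperSum u := by
  set σ := Tuple.sort u with hσ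
  have key : ∑ i ∈ S, u i = ∑ j ∈ S.image σ.symm, (u ∘ σ) j := by
    rw [Finset.sum_image (fun a _ b _ h => σ.symm.injective h)]
    apply Finset.sum_congr rfl
    intro i _
    simp
  rw [key]
  exact sum_le_of_monotone (u ∘ σ) (Tuple.monotone_sort u) _
    (by rw [Finset.card_image_of_injective _ σ.symm.injective, hS])

lemma upperSum_add_le (A B : Fin 26 → ℕ) :
    upperSum (A + B) ≤ upperSum A + upperSum B := by
  set σ := Tuple.sort (A + B) with hσ
  set S := (Finset.univ.filter (fun i : Fin 26 => 13 ≤ (i : ℕ))).image σ with hS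
  have hcard : S.card = 13 := by
    rw [hS, Finset.card_image_of_injective _ σ.injective]
    decide
  have h1 : upperSum (A + B) = ∑ i ∈ S, (A + B) i := by
    rw [hS, Finset.sum_image (fun a _ b _ h => σ.injective h)]
    rfl
  rw [h1]
  have : ∑ i ∈ S, (A + B) i = ∑ i ∈ S, A i + ∑ i ∈ S, B i := by
    rw [← Finset.sum_add_distrib]; rfl
  rw [this]
  exact Nat.add_le_add (sum_le_upperSum A S hcard) (sum_le_upperSum B S hcard)

lemma upperSum_add_lowerSum (u : Fin 26 → ℕ) :
    upperSum u + lowerSum u = ∑ i, u i := by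
  unfold upperSum lowerSum
  have hfilt : Finset.univ.filter (fun i : Fin 26 => (i : ℕ) < 13) =
      Finset.univ.filter (fun i : Fin 26 => ¬ 13 ≤ (i : ℕ)) := by
    ext i; simp
  rw [hfilt,
    Finset.sum_filter_add_sum_filter_not Finset.univ (fun i : Fin 26 => 13 ≤ (i : ℕ))]
  exact Equiv.sum_comp (Tuple.sort u) u

/-- Twist is subadditive: `twist (A + B) ≤ twist A + twist B`. -/
theorem twist_subadditive (A B : Fin 26 → ℕ) :
    twist (A + B) ≤ twist A + twist B := by
  have hAB := upperSum_add_lowerSum (A + B)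
  have hA := upperSum_add_lowerSum A
  have hB := upperSum_add_lowerSum B
  have hsum : ∑ i, (A + B) i = ∑ i, A i + ∑ i, B i := by
    rw [← Finset.sum_add_distrib]; rfl
  have hU := upperSum_add_le A B
  unfold twist
  have hAB' : (lowerSum (A + B) : ℤ) = (∑ i, (A + B) i : ℕ) - upperSum (A + B) := by
    omega
  omega
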